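/- arXiv:1512.07647 — 3 statements merged into one kernel-verified Lean document; each statement's English description precedes it below -/
import Mathlib

section
/- Let n > 1 and let a_1, ..., a_n, a_{n+1} be real numbers satisfying (1/(n-1))·(a_1 + ... + a_n)^2 = a_1^2 + ... + a_n^2 + a_{n+1}. Then 2·a_1·a_2 ≥ a_{n+1}. -/
theorem chen_lemma (n : ℕ) (hn : 1 < n) (a : Fin (n + 1) → ℝ)
    (h : (1 / ((n : ℝ) - 1)) * (∑ i : Fin n, a i.castSucc) ^ 2 =
      ∑ i : Fin n, (a i.castSucc) ^ 2 + a (Fin.last n)) :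
    2 * a 0 * a 1 ≥ a (Fin.last n) := by
  obtain ⟨m, rfl⟩ : ∃ m, n = m + 2 := ⟨n - 2, by omega⟩
  set b : Fin (m + 2) → ℝ := fun i => a i.castSucc with hb
  set L : ℝ := a (Fin.last (m + 2)) with hL
  set g : Fin (m + 1) → ℝ := Fin.cons (b 0 + b 1) (fun i => b i.succ.succ) with hg
  have hsum : ∑ i : Fin (m + 1), g i = ∑ i : Fin (m + 2), b i := by
    rw [Fin.sum_univ_succ (f := g), Fin.sum_univ_succ (f := b), Fin.sum_univ_succ]
    simp [hg]
    ring
  have hsq : ∑ i : Fin (m + 1), (g i) ^ 2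
      = (b 0 + b 1) ^ 2 + ∑ i : Fin m, (b i.succ.succ) ^ 2 := by
    rw [Fin.sum_univ_succ (f := fun i => (g i) ^ 2)]
    simp [hg]
  have hb2 : ∑ i : Fin (m + 2), (b i) ^ 2
      = b 0 ^ 2 + b 1 ^ 2 + ∑ i : Fin m, (b i.succ.succ) ^ 2 := by
    rw [Fin.sum_univ_succ (f := fun i => (b i) ^ 2), Fin.sum_univ_succ,
      Fin.succ_zero_eq_one]
    ring
  have cauchy : (∑ i : Fin (m + 1), g i) ^ 2
      ≤ (m + 1 : ℝ) * ∑ i : Fin (m + 1), (g i) ^ 2 := by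
    have := sq_sum_le_card_mul_sum_sq (s := (Finset.univ : Finset (Fin (m+1)))) (f := g)
    simpa using this
  have hcast : ((m + 2 : ℕ) : ℝ) - 1 = (m : ℝ) + 1 := by push_cast; ring
  rw [hcast] at h
  have hpos : (0 : ℝ) < (m : ℝ) + 1 := by positivity
  have h' : (∑ i : Fin (m + 2), b i) ^ 2
      = ((m : ℝ) + 1) * (∑ i : Fin (m + 2), (b i) ^ 2 + L) := by
    field_simp at h
    linarith [h]
  rw [hsum, hsq] at cauchy
  rw [hb2] at h'
  rw [h'] at cauchy
  have ha0 : a 0 = b 0 := rfl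
  have ha1 : a 1 = b 1 := rfl
  rw [ha0, ha1]
  nlinarith [cauchy, hpos]
end

section
/- Let n > 1 and let a_1, ..., a_n, a_{n+1} be real numbers satisfying (1/(n-1))·(a_1 + ... + a_n)^2 = a_1^2 + ... + a_n^2 + a_{n+1}. Then 2·a_1·a_2 = a_{n+1} if and only if a_1 + a_2 = a_3 = a_4 = ... = a_n. -/
/-!
Merge `a₁` and `a₂` into the single number `a₁ + a₂`. The relation then says that for the `n - 1`
numbers `(b₁, …, bₙ₋₁) = (a₁ + a₂, a₃, …, aₙ)` the Cauchy–Schwarz defect `(n - 1) · ∑ bᵢ² - (∑ bᵢ)²` equals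
`(n - 1) (2 a₁ a₂ - aₙ₊₁)`, and that defect vanishes exactly when all the `bᵢ` are equal.
-/

open Finset

variable {ι R : Type*}

theorem card_add_one_mul_sq_add_sum_sq_sub_sq_add_sum [CommRing R] (t : Finset ι) (x : R)
    (y : ι → R) :
    (#t + 1) * (x ^ 2 + ∑ i ∈ t, y i ^ 2) - (x + ∑ i ∈ t, y i) ^ 2 =
      (#t * ∑ i ∈ t, y i ^ 2 - (∑ i ∈ t, y i) ^ 2) + ∑ i ∈ t, (y i - x) ^ 2 := by
  have hdev : ∑ i ∈ t, (y i - x) ^ 2 =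
      ∑ i ∈ t, y i ^ 2 - 2 * x * ∑ i ∈ t, y i + #t * x ^ 2 := by
    simp only [sub_sq, sum_add_distrib, sum_sub_distrib, mul_sum, sum_const, nsmul_eq_mul,
      mul_right_comm _ (y _) x]
  rw [hdev]
  ring

section OrderedRing

variable [CommRing R] [LinearOrder R] [IsStrictOrderedRing R]

theorem sq_add_sum_eq_card_add_one_mul_iff (t : Finset ι) (x : R) (y : ι → R) :
    (x + ∑ i ∈ t, y i) ^ 2 = (#t + 1) * (x ^ 2 + ∑ i ∈ t, y i ^ 2) ↔ ∀ i ∈ t, y i = x := by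
  constructor
  · intro h
    have hdefect := card_add_one_mul_sq_add_sum_sq_sub_sq_add_sum t x y
    have hcs : (∑ i ∈ t, y i) ^ 2 ≤ #t * ∑ i ∈ t, y i ^ 2 := sq_sum_le_card_mul_sum_sq
    have hdev : ∑ i ∈ t, (y i - x) ^ 2 = 0 :=
      le_antisymm (by linarith) (sum_nonneg fun i _ => sq_nonneg _)
    intro i hi
    exact sub_eq_zero.mp <| (pow_eq_zero_iff two_ne_zero).mp <|
      (sum_eq_zero_iff_of_nonneg fun i _ => sq_nonneg _).mp hdev i hi
  · intro hy
    rw [sum_congr rfl hy, sum_congr rfl fun i hi => congrArg (· ^ 2) (hy i hi)]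
    simp only [sum_const, nsmul_eq_mul]
    ring

theorem two_mul_eq_iff_forall_eq_add_of_sq_add_sum_eq {t : Finset ι} {x₁ x₂ c : R}
    {y : ι → R}
    (h : (x₁ + x₂ + ∑ i ∈ t, y i) ^ 2 = (#t + 1) * (x₁ ^ 2 + x₂ ^ 2 + ∑ i ∈ t, y i ^ 2 + c)) :
    2 * x₁ * x₂ = c ↔ ∀ i ∈ t, y i = x₁ + x₂ := by
  rw [← sq_add_sum_eq_card_add_one_mul_iff, h,
    mul_right_inj' (by positivity : (0 : R) < #t + 1).ne']
  constructor <;> intro h <;> linear_combination -h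

end OrderedRing

theorem chen_lemma_equality (n : ℕ) (hn : 3 ≤ n) (a : Fin (n + 1) → ℝ)
    (h : (1 / ((n : ℝ) - 1)) * (∑ i : Fin n, a i.castSucc) ^ 2 =
      ∑ i : Fin n, (a i.castSucc) ^ 2 + a (Fin.last n)) :
    2 * a 0 * a 1 = a (Fin.last n) ↔
      ∀ i : Fin n, 2 ≤ (i : ℕ) → a 0 + a 1 = a i.castSucc := by
  obtain ⟨m, rfl⟩ : ∃ m, n = m + 2 := ⟨n - 2, by omega⟩
  have hcard : ((m + 2 : ℕ) : ℝ) - 1 = #(univ : Finset (Fin m)) + 1 := by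
    rw [card_univ, Fintype.card_fin]
    push_cast
    ring
  simp only [Fin.sum_univ_succ, Fin.castSucc_zero, Fin.succ_zero_eq_one, Fin.castSucc_one,
    ← add_assoc] at h
  rw [hcard, one_div, inv_mul_eq_iff_eq_mul₀ (by positivity)] at h
  rw [two_mul_eq_iff_forall_eq_add_of_sq_add_sum_eq h]
  simp [Fin.forall_fin_succ, eq_comm]
end

section
/- Let n ≥ 3, γ ≥ 2 be natural numbers and a_1, ..., a_{γ+1}, ε real numbers with (Σ_{i=1}^{γ+1} a_i)² = γ·(ε + Σ_{i=1}^{γ+1} a_i²). Then 2·a_1·a_2 ≥ ε. -/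
theorem generalized_chen_application (n γ : ℕ) (hn : 3 ≤ n) (hγ : 2 ≤ γ)
    (a : Fin (γ + 1) → ℝ) (ε : ℝ)
    (h : (∑ i : Fin (γ + 1), a i) ^ 2 = (γ : ℝ) * (ε + ∑ i : Fin (γ + 1), (a i) ^ 2)) :
    2 * a 0 * a 1 ≥ ε := by
  obtain ⟨m, rfl⟩ : ∃ m, γ = m + 2 := ⟨γ - 2, by omega⟩
  set T := ∑ i : Fin (m + 1), a i.succ.succ with hT
  set Q := ∑ i : Fin (m + 1), (a i.succ.succ) ^ 2 with hQ
  have hsum : ∑ i : Fin (m + 2 + 1), a i = a 0 + a 1 + T := by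
    rw [Fin.sum_univ_succ, Fin.sum_univ_succ]
    have : (Fin.succ 0 : Fin (m + 2 + 1)) = 1 := rfl
    rw [this]; ring
  have hsq : ∑ i : Fin (m + 2 + 1), (a i) ^ 2 = a 0 ^ 2 + a 1 ^ 2 + Q := by
    rw [Fin.sum_univ_succ, Fin.sum_univ_succ]
    have : (Fin.succ 0 : Fin (m + 2 + 1)) = 1 := rfl
    rw [this]; ring
  have hCS : T ^ 2 ≤ (m + 1 : ℝ) * Q := by
    have := sq_sum_le_card_mul_sum_sq (s := (Finset.univ : Finset (Fin (m + 1))))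
      (f := fun i => a i.succ.succ)
    simpa [hT, hQ] using this
  rw [hsum, hsq] at h
  have hm : (0:ℝ) ≤ (m:ℝ) := Nat.cast_nonneg m
  have hCS2 : (0:ℝ) ≤ ((m:ℝ) + 2) * ((m + 1 : ℝ) * Q - T ^ 2) :=
    mul_nonneg (by linarith) (by linarith)
  have key := sq_nonneg (((m:ℝ) + 1) * (a 0 + a 1) - T)
  push_cast at h
  have step : ((m:ℝ)+2)*((m:ℝ)+1)*(2*a 0*a 1 - ε)
      = (((m:ℝ)+1)*(a 0 + a 1) - T)^2 + ((m:ℝ)+2)*(((m:ℝ)+1)*Q - T^2) := by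
    linear_combination ((m:ℝ)+1) * h
  have h2 : 0 ≤ ((m:ℝ)+2)*((m:ℝ)+1)*(2*a 0*a 1 - ε) := by
    rw [step]; linarith [key, hCS2]
  have hpos : 0 < ((m:ℝ)+2)*((m:ℝ)+1) := by positivity
  nlinarith [h2, hpos]
end
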